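/- arXiv:2603.11958 — 3 statements merged into one kernel-verified Lean document; each statement's English description precedes it below -/
import Mathlib

section
/- For the complete binary tree of depth k, the y-set-diameter equals 2k for all 1 ≤ y ≤ 2^{k−1}. -/
/-- Vertices of the complete binary tree of depth `k`: binary strings of length at most `k`
(the root is the empty string, the leaves the strings of length `k`). -/
def BTVertex (k : ℕ) := {l : List Bool // l.length ≤ k}

/-- The complete binary tree of depth `k`: a vertex is adjacent to its parent, obtained by
removing the first letter of its (nonempty) string. -/
def binTree (k : ℕ) : SimpleGraph (BTVertex k) where
  Adj x y := (∃ b, x.1 = b :: y.1) ∨ (∃ b, y.1 = b :: x.1)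
  symm := ⟨by rintro x y (⟨b, h⟩ | ⟨b, h⟩) <;> [right; left] <;> exact ⟨b, h⟩⟩
  loopless := ⟨by rintro x (⟨b, h⟩ | ⟨b, h⟩) <;> simpa using congrArg List.length h⟩

/-- The distance from a vertex `v` to a set `S` of vertices: the minimum graph distance
from `v` to a member of `S`. -/
noncomputable def distToSet {V : Type*} (G : SimpleGraph V) (v : V) (S : Finset V) : ℕ :=
  sInf {d | ∃ s ∈ S, G.dist v s = d}

/-!
Every vertex is joined to the root by a walk as long as its string, and the length of the
string changes by one along each edge, so the distance from the root to `x` is `|x|` and any two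
vertices are at distance at most `|x| + |y| ≤ 2k`. Off the root, adjacent vertices have the same
last letter, so a walk from a leaf ending in `false` to a leaf ending in `true` passes the root
and has length at least `2k`. There are `2 ^ (k - 1)` leaves ending in `true`, so any `y` of
them are at distance exactly `2k` from a leaf ending in `false`.
-/

open SimpleGraph

section distToSet

variable {V : Type*} {G : SimpleGraph V} {v s : V} {S : Finset V}

lemma distToSet_le_dist (hs : s ∈ S) : distToSet G v S ≤ G.dist v s :=
  Nat.sInf_le ⟨s, hs, rfl⟩

lemma distToSet_eq_of_forall_dist_eq {d : ℕ} (hS : S.Nonempty)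
    (h : ∀ s ∈ S, G.dist v s = d) : distToSet G v S = d := by
  obtain ⟨s, hs⟩ := hS
  refine le_antisymm ((distToSet_le_dist hs).trans (h s hs).le) ?_
  refine le_csInf ⟨d, s, hs, h s hs⟩ ?_
  rintro _ ⟨t, ht, rfl⟩
  exact (h t ht).ge

end distToSet

lemma SimpleGraph.Connected.dist_eq_add_of_forall_mem_support {V : Type*} {G : SimpleGraph V}
    (hG : G.Connected) {x y u : V} (h : ∀ p : G.Walk x y, u ∈ p.support) :
    G.dist x y = G.dist x u + G.dist u y := by
  classical
  refine le_antisymm hG.dist_triangle ?_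
  obtain ⟨p, hp⟩ := hG.exists_walk_length_eq_dist x y
  have hsplit := congrArg Walk.length (p.take_spec (h p))
  rw [Walk.length_append] at hsplit
  have := dist_le (p.takeUntil u (h p))
  have := dist_le (p.dropUntil u (h p))
  omega

namespace binTree

variable {k : ℕ}

def root (k : ℕ) : BTVertex k := ⟨[], Nat.zero_le k⟩

lemma length_eq_succ_of_adj {x y : BTVertex k} (h : (binTree k).Adj x y) :
    x.1.length = y.1.length + 1 ∨ y.1.length = x.1.length + 1 := by
  rcases h with ⟨b, h⟩ | ⟨b, h⟩
  · left; simpa using congrArg List.length h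
  · right; simpa using congrArg List.length h

lemma length_le_length_add_length {x y : BTVertex k} (p : (binTree k).Walk x y) :
    x.1.length ≤ y.1.length + p.length := by
  induction p with
  | nil => simp
  | cons h p ih =>
    rw [Walk.length_cons]
    rcases length_eq_succ_of_adj h with h' | h' <;> omega

def walkToRoot : (l : List Bool) → (h : l.length ≤ k) → (binTree k).Walk ⟨l, h⟩ (root k)
  | [], _ => Walk.nil
  | b :: t, h => Walk.cons (Or.inl ⟨b, rfl⟩) (walkToRoot t (Nat.le_of_succ_le h))

lemma length_walkToRoot : ∀ (l : List Bool) (h : l.length ≤ k),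
    (walkToRoot l h).length = l.length
  | [], _ => rfl
  | _ :: t, _ => congrArg Nat.succ (length_walkToRoot t _)

lemma connected : (binTree k).Connected :=
  have : Nonempty (BTVertex k) := ⟨root k⟩
  ⟨fun x y => (walkToRoot x.1 x.2).reachable.trans (walkToRoot y.1 y.2).reachable.symm⟩

lemma dist_root (x : BTVertex k) : (binTree k).dist x (root k) = x.1.length := by
  refine le_antisymm ((dist_le (walkToRoot x.1 x.2)).trans (length_walkToRoot x.1 x.2).le) ?_
  obtain ⟨p, hp⟩ := connected.exists_walk_length_eq_dist x (root k)
  rw [← hp]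
  simpa [root] using length_le_length_add_length p

lemma dist_le_length_add_length (x y : BTVertex k) :
    (binTree k).dist x y ≤ x.1.length + y.1.length := by
  calc (binTree k).dist x y ≤ (binTree k).dist x (root k) + (binTree k).dist (root k) y :=
        connected.dist_triangle
    _ = x.1.length + y.1.length := by rw [dist_comm (u := root k), dist_root, dist_root]

lemma dist_le_two_mul (x y : BTVertex k) : (binTree k).dist x y ≤ 2 * k := by
  have := dist_le_length_add_length x y
  have := x.2
  have := y.2
  omega

lemma getLast?_eq_of_adj {x y : BTVertex k} (h : (binTree k).Adj x y)
    (hx : x ≠ root k) (hy : y ≠ root k) : x.1.getLast? = y.1.getLast? := by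
  have hx' : x.1 ≠ [] := fun h => hx (Subtype.ext h)
  have hy' : y.1 ≠ [] := fun h => hy (Subtype.ext h)
  rcases h with ⟨b, h⟩ | ⟨b, h⟩
  · rw [h, List.getLast?_cons, List.getLast?_eq_some_getLast hy', Option.getD_some]
  · rw [h, List.getLast?_cons, List.getLast?_eq_some_getLast hx', Option.getD_some]

lemma getLast?_eq_of_root_notMem_support {x y : BTVertex k} (p : (binTree k).Walk x y)
    (hp : root k ∉ p.support) : x.1.getLast? = y.1.getLast? := by
  induction p with
  | nil => rfl
  | cons h p ih =>
    rw [Walk.support_cons, List.mem_cons, not_or] at hp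
    exact (getLast?_eq_of_adj h (Ne.symm hp.1) (fun h => hp.2 (h ▸ p.start_mem_support))).trans
      (ih hp.2)

lemma dist_eq_length_add_length_of_getLast?_ne {x y : BTVertex k}
    (h : x.1.getLast? ≠ y.1.getLast?) :
    (binTree k).dist x y = x.1.length + y.1.length := by
  have hroot (p : (binTree k).Walk x y) : root k ∈ p.support := by
    by_contra hp
    exact h (getLast?_eq_of_root_notMem_support p hp)
  rw [connected.dist_eq_add_of_forall_mem_support hroot, dist_comm (u := root k), dist_root,
    dist_root]

def leaf {n : ℕ} (b : Bool) : List.Vector Bool n ↪ BTVertex (n + 1) where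
  toFun w := ⟨w.1 ++ [b], by simp⟩
  inj' _ _ h := Subtype.ext (List.append_cancel_right (congrArg Subtype.val h))

@[simp]
lemma leaf_val {n : ℕ} (b : Bool) (w : List.Vector Bool n) : (leaf b w).1 = w.1 ++ [b] := rfl

lemma dist_leaf_false_leaf_true {n : ℕ} (w w' : List.Vector Bool n) :
    (binTree (n + 1)).dist (leaf false w) (leaf true w') = 2 * (n + 1) := by
  rw [dist_eq_length_add_length_of_getLast?_ne (by simp)]
  simp
  omega

end binTree

open binTree in
/-- On the complete binary tree of depth `k`, the `y`-set-diameter equals `2k` for all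
`1 ≤ y ≤ 2 ^ (k - 1)`. -/
theorem binTree_ySetDiameter {k y : ℕ} (hk : 1 ≤ k) (hy : 1 ≤ y) (hyk : y ≤ 2 ^ (k - 1)) :
    IsGreatest {d | ∃ (v : BTVertex k) (S : Finset (BTVertex k)), S.card = y ∧
      distToSet (binTree k) v S = d} (2 * k) := by
  obtain ⟨n, rfl⟩ : ∃ n, k = n + 1 := ⟨k - 1, by omega⟩
  refine ⟨?_, ?_⟩
  · obtain ⟨S, hS, hcard⟩ :=
      Finset.exists_subset_card_eq (s := Finset.univ.map (leaf true)) (by simpa using hyk)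
    have hSne : S.Nonempty := Finset.card_pos.1 (by omega)
    refine ⟨leaf false (List.Vector.replicate n false), S, hcard,
      distToSet_eq_of_forall_dist_eq hSne fun s hs => ?_⟩
    obtain ⟨w, -, rfl⟩ := Finset.mem_map.1 (hS hs)
    exact dist_leaf_false_leaf_true _ _
  · rintro d ⟨v, S, hcard, rfl⟩
    obtain ⟨s, hs⟩ := Finset.card_pos.1 (by omega : 0 < S.card)
    exact (distToSet_le_dist hs).trans (dist_le_two_mul v s)
end

section
/- Let H be a graph with a cut-vertex v, let G₁ be a connected component of H − v, and set G = G₁ ∪ {v} (the induced subgraph on V(G₁) ∪ {v}). If BROADCAST(G,k) is an Adversary win, then BROADCAST(H,k) is an Adversary win. -/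
namespace Broadcast

variable {V : Type*}

/-- In one time step, a token at `p` may remain or move along an edge of `H` to `q`. -/
def Step (H : SimpleGraph V) (p q : V) : Prop := p = q ∨ H.Adj p q

/-- A legal choice for the adversary: a connected spanning subgraph of `G`. -/
def ValidSub (G H : SimpleGraph V) : Prop := H ≤ G ∧ H.Connected

/-- `Knows pos i₀ t a`: agent `a` is knowledgeable at time `t`, when agent `i₀` is
initially knowledgeable and `pos t` gives the agents' positions at time `t`. -/
def Knows {k : ℕ} (pos : ℕ → Fin k → V) (i₀ : Fin k) : ℕ → Fin k → Prop
  | 0 => fun a => a = i₀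
  | (t+1) => fun a =>
      Knows pos i₀ t a ∨ ∃ b, Knows pos i₀ t b ∧ pos (t+1) a = pos (t+1) b

/-- The history of agent positions up to and including time `t`. -/
def hist {k : ℕ} (pos : ℕ → Fin k → V) (t : ℕ) : List (Fin k → V) :=
  (List.range (t+1)).map pos

/-- A run `pos` is consistent with adversary strategy `strat` if at each time step every
agent stays or moves along an edge of the subgraph chosen by the adversary (which may
depend on the history of positions so far). -/
def Consistent {k : ℕ} (strat : List (Fin k → V) → SimpleGraph V)
    (pos : ℕ → Fin k → V) : Prop :=
  ∀ t a, Step (strat (hist pos t)) (pos t a) (pos (t+1) a)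

/-- Adversary wins `BROADCAST(G,k)`: there is an initial placement of the `k` agents on
distinct vertices (agent `0` knowledgeable) and a strategy choosing a connected spanning
subgraph each round, such that in every consistent run some agent never becomes
knowledgeable. -/
def AdversaryWin (G : SimpleGraph V) (k : ℕ) [NeZero k] : Prop :=
  ∃ (init : Fin k → V) (strat : List (Fin k → V) → SimpleGraph V),
    Function.Injective init ∧ (∀ h, ValidSub G (strat h)) ∧
    ∀ pos : ℕ → Fin k → V, pos 0 = init → Consistent strat pos →
      ∃ a, ∀ t, ¬ Knows pos 0 t a

/-- Agents win `BROADCAST(G,k)`: for every initial placement on distinct vertices and every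
adversary strategy choosing connected spanning subgraphs, the agents have a consistent run
in which eventually all agents are knowledgeable. -/
def AgentsWin (G : SimpleGraph V) (k : ℕ) [NeZero k] : Prop :=
  ∀ (init : Fin k → V) (strat : List (Fin k → V) → SimpleGraph V),
    Function.Injective init → (∀ h, ValidSub G (strat h)) →
    ∃ pos : ℕ → Fin k → V, pos 0 = init ∧ Consistent strat pos ∧
      ∃ T, ∀ a, Knows pos 0 T a

end Broadcast

open Broadcast

/-!
The adversary on `H` projects the run onto `C ∪ {v}` by collapsing everything outside `C`
onto `v`, answers with its `G`-strategy on the projected history, and adds all edges of `H`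
outside `C`. As `C` is attached to the rest of `H` only through `v`, the added edges keep the
chosen subgraph connected, while moves along them project to standing still at `v`; so the
projected run is a legal run on `G`, in which nobody knows more than in the real one.
-/

namespace Broadcast

variable {V W : Type*} {k : ℕ}

theorem Knows.map (f : V → W) {pos : ℕ → Fin k → V} {i₀ : Fin k} :
    ∀ {t : ℕ} {a : Fin k}, Knows pos i₀ t a → Knows (fun t a => f (pos t a)) i₀ t a
  | 0, _, h => h
  | _ + 1, _, .inl h => .inl (Knows.map f h)
  | _ + 1, _, .inr ⟨b, hb, hab⟩ => .inr ⟨b, Knows.map f hb, congrArg f hab⟩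

theorem hist_map (f : V → W) (pos : ℕ → Fin k → V) (t : ℕ) :
    hist (fun t a => f (pos t a)) t = (hist pos t).map (f ∘ ·) := by
  simp only [hist, List.map_map]
  rfl

theorem AdversaryWin.of_retraction [NeZero k] {G : SimpleGraph W} {H : SimpleGraph V}
    (ι : W → V) (π : V → W) (hπι : Function.LeftInverse π ι)
    (lift : SimpleGraph W → SimpleGraph V)
    (hlift : ∀ G', ValidSub G G' → ValidSub H (lift G'))
    (hstep : ∀ G' p q, Step (lift G') p q → Step G' (π p) (π q))
    (hG : AdversaryWin G k) : AdversaryWin H k := by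
  obtain ⟨init, strat, hinj, hvalid, hwin⟩ := hG
  refine ⟨ι ∘ init, fun h => lift (strat (h.map (π ∘ ·))),
    hπι.injective.comp hinj, fun h => hlift _ (hvalid _), fun pos hpos0 hcons => ?_⟩
  have hproj0 : (fun a => π (pos 0 a)) = init := by
    funext a
    simp only [hpos0, Function.comp_apply, hπι (init a)]
  have hproj : Consistent strat (fun t a => π (pos t a)) := by
    intro t a
    rw [hist_map]
    exact hstep _ _ _ (hcons t a)
  obtain ⟨a, ha⟩ := hwin _ hproj0 hproj
  exact ⟨a, fun t ht => ha t (Knows.map π ht)⟩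

section CutVertex

variable (H : SimpleGraph V) (C : Set V) (v : V)

open Classical in
noncomputable def collapse (x : V) : ↥(C ∪ {v}) :=
  if h : x ∈ C then ⟨x, Or.inl h⟩ else ⟨v, Or.inr rfl⟩

def extendOutside (G' : SimpleGraph ↥(C ∪ {v})) : SimpleGraph V :=
  G'.map (Function.Embedding.subtype _) ⊔ (H.induce Cᶜ).map (Function.Embedding.subtype _)

variable {C v}

theorem collapse_of_not_mem {x : V} (hx : x ∉ C) : collapse C v x = ⟨v, Or.inr rfl⟩ :=
  dif_neg hx

theorem collapse_leftInverse : Function.LeftInverse (collapse C v) Subtype.val := by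
  rintro ⟨x, hx | rfl⟩
  · exact dif_pos hx
  · unfold collapse
    split_ifs <;> rfl

theorem extendOutside_le {G' : SimpleGraph ↥(C ∪ {v})} (hG' : G' ≤ H.induce (C ∪ {v})) :
    extendOutside H C v G' ≤ H :=
  sup_le ((SimpleGraph.map_le_iff_le_comap _ _ _).mpr hG')
    ((SimpleGraph.map_le_iff_le_comap _ _ _).mpr le_rfl)

variable {H}

/-- A walk from outside `C` into `C ∪ {v}` passes through `v` before it enters `C`. -/
theorem reachable_of_walk_of_not_mem (hCclosed : ∀ a ∈ C, ∀ b, H.Adj a b → b ∈ C ∪ {v})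
    (G' : SimpleGraph ↥(C ∪ {v})) {x y : V} (w : H.Walk x y) (hx : x ∉ C)
    (hy : y ∈ C ∪ {v}) : (extendOutside H C v G').Reachable x v := by
  induction w with
  | nil => rw [hy.resolve_left hx]
  | @cons x z _ hxz w ih =>
    by_cases hz : z ∈ C
    · obtain hxC | rfl := hCclosed z hz x hxz.symm
      · exact absurd hxC hx
      · rfl
    · have hxz' : (extendOutside H C v G').Adj x z :=
        Or.inr ((SimpleGraph.map_adj _ _ _ _).mpr ⟨⟨x, hx⟩, ⟨z, hz⟩, hxz, rfl, rfl⟩)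
      exact hxz'.reachable.trans (ih hz hy)

theorem validSub_extendOutside (hH : H.Connected)
    (hCclosed : ∀ a ∈ C, ∀ b, H.Adj a b → b ∈ C ∪ {v})
    {G' : SimpleGraph ↥(C ∪ {v})} (hG' : ValidSub (H.induce (C ∪ {v})) G') :
    ValidSub H (extendOutside H C v G') := by
  refine ⟨extendOutside_le H hG'.1, (SimpleGraph.connected_iff_exists_forall_reachable _).2
    ⟨v, fun x => ?_⟩⟩
  by_cases hx : x ∈ C
  · let incl : G' →g extendOutside H C v G' :=
      ⟨Subtype.val, fun h => Or.inl ((SimpleGraph.map_adj _ _ _ _).mpr ⟨_, _, h, rfl, rfl⟩)⟩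
    exact (hG'.2 ⟨v, Or.inr rfl⟩ ⟨x, Or.inl hx⟩).map incl
  · exact (reachable_of_walk_of_not_mem hCclosed G' (hH x v).some hx (Or.inr rfl)).symm

theorem step_collapse {G' : SimpleGraph ↥(C ∪ {v})} {p q : V}
    (h : Step (extendOutside H C v G') p q) : Step G' (collapse C v p) (collapse C v q) := by
  rcases h with rfl | h | h
  · exact .inl rfl
  · obtain ⟨p', q', hpq, rfl, rfl⟩ := (SimpleGraph.map_adj _ _ _ _).mp h
    simp only [Function.Embedding.coe_subtype, collapse_leftInverse p', collapse_leftInverse q']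
    exact .inr hpq
  · obtain ⟨⟨p, hp⟩, ⟨q, hq⟩, -, rfl, rfl⟩ := (SimpleGraph.map_adj _ _ _ _).mp h
    exact .inl ((collapse_of_not_mem hp).trans (collapse_of_not_mem hq).symm)

end CutVertex

end Broadcast

theorem adversaryWin_of_cut_vertex_general {V : Type*} {H : SimpleGraph V} (hH : H.Connected)
    (v : V)
    (C : Set V)
    (hCclosed : ∀ a ∈ C, ∀ b : V, H.Adj a b → b ∈ C ∪ {v})
    (k : ℕ) [NeZero k]
    (hadv : AdversaryWin (SimpleGraph.induce (C ∪ {v}) H) k) :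
    AdversaryWin H k :=
  hadv.of_retraction Subtype.val (collapse C v) collapse_leftInverse (extendOutside H C v)
    (fun _ => validSub_extendOutside hH hCclosed) (fun _ _ _ => step_collapse)

/-- Let `H` be a connected graph with a cut-vertex `v`, and let `C` be (the vertex set of)
a connected component of `H - v`.  If `BROADCAST(G, k)` is an Adversary win on the induced
subgraph `G` on `C ∪ {v}`, then `BROADCAST(H, k)` is an Adversary win. -/
theorem adversaryWin_of_cut_vertex {V : Type*} {H : SimpleGraph V} (hH : H.Connected)
    (v : V) (hcut : ¬ (SimpleGraph.induce {x : V | x ≠ v} H).Connected)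
    (C : Set V) (hvC : v ∉ C)
    (hCconn : (SimpleGraph.induce C H).Connected)
    (hCclosed : ∀ a ∈ C, ∀ b : V, H.Adj a b → b ∈ C ∪ {v})
    (k : ℕ) [NeZero k]
    (hadv : AdversaryWin (SimpleGraph.induce (C ∪ {v}) H) k) :
    AdversaryWin H k :=
  adversaryWin_of_cut_vertex_general hH v C hCclosed k hadv
end

section
/- If G is a graph obtained from a graph G₀ by attaching a path (identifying one endpoint of the path with a vertex of G₀), and BROADCAST(G₀,k) is an Agents win, then BROADCAST(G,k) is an Agents win. -/
open Broadcast

/-- The graph obtained from `G₀` by attaching a path with `m` further vertices at the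
vertex `u`: vertex `inr ⟨0, _⟩` is joined to `u`, and `inr i`, `inr j` are joined when
`|i - j| = 1`. -/
def attachPath {V : Type*} (G₀ : SimpleGraph V) (u : V) (m : ℕ) :
    SimpleGraph (V ⊕ Fin m) where
  Adj x y :=
    (∃ a b, x = Sum.inl a ∧ y = Sum.inl b ∧ G₀.Adj a b) ∨
    (∃ i : Fin m, ((x = Sum.inl u ∧ y = Sum.inr i) ∨ (y = Sum.inl u ∧ x = Sum.inr i)) ∧
      i.val = 0) ∨
    (∃ i j : Fin m, x = Sum.inr i ∧ y = Sum.inr j ∧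
      (i.val + 1 = j.val ∨ j.val + 1 = i.val))
  symm := by
    refine ⟨?_⟩
    rintro x y (⟨a, b, rfl, rfl, h⟩ | ⟨i, h1, h2⟩ | ⟨i, j, rfl, rfl, h⟩)
    · exact Or.inl ⟨b, a, rfl, rfl, h.symm⟩
    · exact Or.inr (Or.inl ⟨i, h1.symm, h2⟩)
    · exact Or.inr (Or.inr ⟨j, i, rfl, rfl, h.symm⟩)
  loopless := by
    refine ⟨?_⟩
    rintro x (⟨a, b, rfl, h1, h⟩ | ⟨i, (⟨h1, h2⟩ | ⟨h1, h2⟩), h3⟩ | ⟨i, j, rfl, h1, h⟩)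
    · exact G₀.irrefl (by cases h1; exact h)
    · exact absurd (h1 ▸ h2) (by simp)
    · exact absurd (h1 ▸ h2) (by simp)
    · cases h1; omega

/-!
The agents first walk along the attached path towards `u`: its edges are bridges, so the
adversary has to offer them, and after at most `m` rounds every agent stands in `G₀`. From then
on only the restriction of the adversary's subgraph to `G₀` matters, and it is a connected
spanning subgraph of `G₀`. While some vertex carries two agents and some vertex is empty, pushing
one agent per vertex one step along a path of that subgraph occupies a new vertex without
vacating any. The agents thus reach a placement that is injective, where the winning strategy on
`G₀` takes over, or surjective and not injective; then the same push brings, in every round, an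
uninformed agent onto the vertex of an informed one.

Each phase is a well-founded induction, one round at a time, on the game started from an
arbitrary placement with an arbitrary set of informed agents (`Broadcast.WinsFrom`).
-/

open Function Set

namespace Broadcast

variable {V : Type*} {k : ℕ}

def share (c : Fin k → V) (K : Set (Fin k)) : Set (Fin k) :=
  K ∪ {a | ∃ b ∈ K, c a = c b}

def informed (pos : ℕ → Fin k → V) (K : Set (Fin k)) : ℕ → Set (Fin k)
  | 0 => K
  | t + 1 => share (pos (t + 1)) (informed pos K t)

theorem knows_iff_mem_informed {pos : ℕ → Fin k → V} {i₀ : Fin k} {t : ℕ} {a : Fin k} :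
    Knows pos i₀ t a ↔ a ∈ informed pos {i₀} t := by
  induction t generalizing a with
  | zero => rfl
  | succ t ih => simp only [Knows, informed, share, mem_union, mem_ofPred_eq, ih]

theorem informed_mono {pos : ℕ → Fin k → V} {K K' : Set (Fin k)} (h : K ⊆ K') (t : ℕ) :
    informed pos K t ⊆ informed pos K' t := by
  induction t with
  | zero => exact h
  | succ t ih =>
    rintro a (ha | ⟨b, hb, hab⟩)
    exacts [Or.inl (ih ha), Or.inr ⟨b, ih hb, hab⟩]

theorem informed_succ (pos : ℕ → Fin k → V) (K : Set (Fin k)) (t : ℕ) :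
    informed pos K (t + 1) = informed (fun s ↦ pos (s + 1)) (share (pos 1) K) t := by
  induction t with
  | zero => rfl
  | succ t ih => rw [informed, ih]; rfl

theorem informed_comp {W : Type*} {f : V → W} (hf : Injective f) (pos : ℕ → Fin k → V)
    (K : Set (Fin k)) (t : ℕ) : informed (fun s ↦ f ∘ pos s) K t = informed pos K t := by
  induction t with
  | zero => rfl
  | succ t ih => simp only [informed, share, ih, comp_apply, hf.eq_iff]

def IsMove (H : SimpleGraph V) (c c' : Fin k → V) : Prop :=
  ∀ a, Step H (c a) (c' a)

theorem isMove_refl (H : SimpleGraph V) (c : Fin k → V) : IsMove H c c :=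
  fun _ ↦ Or.inl rfl

def WinsFrom (G : SimpleGraph V) (c : Fin k → V) (K : Set (Fin k)) : Prop :=
  ∀ strat : List (Fin k → V) → SimpleGraph V, (∀ h, ValidSub G (strat h)) →
    ∃ pos : ℕ → Fin k → V, pos 0 = c ∧ Consistent strat pos ∧ ∃ T, informed pos K T = univ

theorem agentsWin_iff_winsFrom {G : SimpleGraph V} [NeZero k] :
    AgentsWin G k ↔ ∀ c : Fin k → V, Injective c → WinsFrom G c {0} := by
  have hall (pos : ℕ → Fin k → V) (T : ℕ) :
      (∀ a, Knows pos 0 T a) ↔ informed pos {0} T = univ := by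
    simp only [knows_iff_mem_informed, eq_univ_iff_forall]
  simp only [AgentsWin, WinsFrom, hall]
  exact ⟨fun h c hc strat hs ↦ h c strat hc hs, fun h c strat hc hs ↦ h c hc strat hs⟩

def prepend (c : Fin k → V) (pos : ℕ → Fin k → V) : ℕ → Fin k → V
  | 0 => c
  | t + 1 => pos t

theorem hist_prepend (c : Fin k → V) (pos : ℕ → Fin k → V) (t : ℕ) :
    hist (prepend c pos) (t + 1) = c :: hist pos t := by
  simp only [hist, List.range_succ_eq_map (n := t + 1), List.map_cons, List.map_map]
  rfl

namespace WinsFrom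

variable {G : SimpleGraph V} {c : Fin k → V} {K : Set (Fin k)}

theorem of_univ : WinsFrom G c univ :=
  fun _ _ ↦ ⟨fun _ ↦ c, rfl, fun _ ↦ isMove_refl _ c, 0, rfl⟩

theorem mono {K' : Set (Fin k)} (h : WinsFrom G c K) (hK : K ⊆ K') : WinsFrom G c K' := by
  intro strat hstrat
  obtain ⟨pos, h0, hcons, T, hT⟩ := h strat hstrat
  exact ⟨pos, h0, hcons, T, univ_subset_iff.1 (hT ▸ informed_mono hK T)⟩

theorem of_forall_move
    (h : ∀ H, ValidSub G H → ∃ c', IsMove H c c' ∧ WinsFrom G c' (share c' K)) :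
    WinsFrom G c K := by
  intro strat hstrat
  obtain ⟨c', hmove, hwin⟩ := h _ (hstrat [c])
  obtain ⟨pos, rfl, hcons, T, hT⟩ := hwin (fun l ↦ strat (c :: l)) fun _ ↦ hstrat _
  refine ⟨prepend c pos, rfl, ?_, T + 1, by rwa [informed_succ]⟩
  rintro (_ | t) a
  · exact hmove a
  · rw [hist_prepend]
    exact hcons t a

theorem comap {W : Type*} {G' : SimpleGraph W} {f : V → W} (hf : Injective f)
    (hvalid : ∀ H, ValidSub G' H → ValidSub G (H.comap f)) (h : WinsFrom G c K) :
    WinsFrom G' (f ∘ c) K := by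
  intro strat hstrat
  obtain ⟨pos, rfl, hcons, T, hT⟩ :=
    h (fun l ↦ (strat (l.map (f ∘ ·))).comap f) fun _ ↦ hvalid _ (hstrat _)
  have hhist (t : ℕ) : hist (fun s ↦ f ∘ pos s) t = (hist pos t).map (f ∘ ·) := by
    simp only [hist, List.map_map]
    rfl
  refine ⟨fun t ↦ f ∘ pos t, rfl, fun t a ↦ ?_, T, by rwa [informed_comp hf]⟩
  rw [hhist]
  exact (hcons t a).imp (congrArg f) id

end WinsFrom

section Shift

variable {H : SimpleGraph V} {c : Fin k → V}

/-- The spare agent `s` and one agent on each later vertex of `w` before the first vertex of `S`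
advance one step along `w`. -/
theorem exists_shift_along_path {S : Set V} (hS : ∀ v ∉ S, v ∈ range c) :
    ∀ {x y : V} (w : H.Walk x y), w.IsPath → x ∉ S → y ∈ S → ∀ s, c s = x →
      ∃ c' b, IsMove H c c' ∧ c b ∉ S ∧ c' b ∈ S ∧ range c ⊆ insert x (range c') ∧
        ∀ a, c' a ≠ c a → c a ∉ S ∧ c a ∈ w.support ∧ (c a = x → a = s) := by
  intro x y w
  induction w with
  | nil => exact fun _ hx hy ↦ absurd hy hx
  | @cons x z y hxz w ih =>
    intro hp hx hy s hs
    rw [SimpleGraph.Walk.cons_isPath_iff] at hp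
    by_cases hz : z ∈ S
    · refine ⟨update c s z, s, fun a ↦ ?_, hs ▸ hx, by simpa, ?_, fun a ha ↦ ?_⟩
      · rcases eq_or_ne a s with rfl | has
        · exact Or.inr (by simpa [hs] using hxz)
        · exact Or.inl (update_of_ne has _ _).symm
      · rintro _ ⟨a, rfl⟩
        rcases eq_or_ne a s with rfl | has
        · exact Or.inl hs
        · exact Or.inr ⟨a, update_of_ne has _ _⟩
      · have has : a = s := by_contra fun has ↦ ha (update_of_ne has _ _)
        subst has
        simp [hs, hx]
    obtain ⟨s', hs'⟩ := hS z hz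
    obtain ⟨c'', b, hmove, hb, hb', hrange, hmoved⟩ := ih hp.1 hz hy s' hs'
    have hc''s : c'' s = c s := by_contra fun h ↦ hp.2 (hs ▸ (hmoved s h).2.1)
    have hbs : b ≠ s := by rintro rfl; exact hx (hs ▸ hc''s ▸ hb')
    refine ⟨update c'' s z, b, fun a ↦ ?_, hb, by rwa [update_of_ne hbs], ?_, fun a ha ↦ ?_⟩
    · rcases eq_or_ne a s with rfl | has
      · exact Or.inr (by simpa [hs] using hxz)
      · rw [update_of_ne has]
        exact hmove a
    · intro v hv
      rcases hrange hv with rfl | ⟨a, rfl⟩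
      · exact Or.inr ⟨s, update_self ..⟩
      · rcases eq_or_ne a s with rfl | has
        · exact Or.inl (hc''s.trans hs)
        · exact Or.inr ⟨a, update_of_ne has _ _⟩
    · rcases eq_or_ne a s with rfl | has
      · simp [hs, hx]
      · rw [update_of_ne has] at ha
        obtain ⟨haS, haw, -⟩ := hmoved a ha
        exact ⟨haS, List.mem_cons_of_mem _ haw, fun hax ↦ absurd (hax ▸ haw) hp.2⟩

theorem exists_shift (hH : H.Preconnected) {S : Set V} (hS : ∀ v ∉ S, v ∈ range c)
    {a₁ a₂ : Fin k} (hne : a₁ ≠ a₂) (heq : c a₁ = c a₂) (hx : c a₁ ∉ S) {y : V} (hy : y ∈ S) :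
    ∃ c' b, IsMove H c c' ∧ range c ⊆ range c' ∧ c b ∉ S ∧ c' b ∈ S ∧
      ∀ a, c a ∈ S → c' a = c a := by
  classical
  let p := (hH (c a₁) y).some.toPath
  obtain ⟨c', b, hmove, hb, hb', hrange, hmoved⟩ :=
    exists_shift_along_path hS p.1 p.2 hx hy a₁ rfl
  have ha₂ : c' a₂ = c a₂ := by_contra fun h ↦ hne ((hmoved a₂ h).2.2 heq.symm).symm
  refine ⟨c', b, hmove, fun v hv ↦ ?_, hb, hb', fun a ha ↦ ?_⟩
  · rcases hrange hv with rfl | hv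
    exacts [⟨a₂, ha₂.trans heq.symm⟩, hv]
  · exact by_contra fun h ↦ (hmoved a h).1 ha

theorem exists_flood_move (hH : H.Preconnected) (hinj : ¬ Injective c) (hsurj : ¬ Surjective c) :
    ∃ c', IsMove H c c' ∧ range c ⊂ range c' := by
  obtain ⟨a₁, a₂, heq, hne⟩ := not_injective_iff.1 hinj
  obtain ⟨y, hy⟩ := not_forall.1 hsurj
  obtain ⟨c', b, hmove, hrange, -, hb', -⟩ :=
    exists_shift hH (S := (range c)ᶜ) (fun _ ↦ not_not.1) hne heq (not_not.2 ⟨a₁, rfl⟩)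
      (y := y) fun ⟨a, ha⟩ ↦ hy ⟨a, ha⟩
  exact ⟨c', hmove, (ssubset_iff_of_subset hrange).2 ⟨c' b, ⟨b, rfl⟩, hb'⟩⟩

theorem exists_spread_move (hH : H.Preconnected) (hsurj : Surjective c) (hinj : ¬ Injective c)
    {K : Set (Fin k)} (hK : K.Nonempty) (hKu : K ≠ univ) :
    ∃ c', IsMove H c c' ∧ Surjective c' ∧ ∃ a ∉ K, ∃ b ∈ K, c' a = c' b := by
  by_cases hmixed : ∃ a ∉ K, ∃ b ∈ K, c a = c b
  · exact ⟨c, isMove_refl H c, hsurj, hmixed⟩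
  push Not at hmixed
  obtain ⟨a₁, a₂, heq, hne⟩ := not_injective_iff.1 hinj
  set S := {v | ∃ d, c d = v ∧ (d ∈ K ↔ a₁ ∉ K)}
  have hx : c a₁ ∉ S := by
    rintro ⟨d, hd, hdK⟩
    by_cases h₁ : a₁ ∈ K
    · exact hmixed d (hdK.not.2 (not_not.2 h₁)) a₁ h₁ hd
    · exact hmixed a₁ h₁ d (hdK.2 h₁) hd.symm
  obtain ⟨y, hy⟩ : S.Nonempty := by
    by_cases h₁ : a₁ ∈ K
    · obtain ⟨d, hd⟩ := (ne_univ_iff_exists_notMem K).1 hKu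
      exact ⟨c d, d, rfl, iff_of_false hd (not_not.2 h₁)⟩
    · obtain ⟨d, hd⟩ := hK
      exact ⟨c d, d, rfl, iff_of_true hd h₁⟩
  obtain ⟨c', b, hmove, hrange, hb, ⟨d, hd, hdK⟩, hstay⟩ :=
    exists_shift hH (fun v _ ↦ hsurj v) hne heq hx hy
  have hbK : b ∈ K ↔ a₁ ∈ K := by
    by_contra h
    exact hb ⟨b, rfl, by tauto⟩
  have hdb : c' d = c' b := (hstay d ⟨d, rfl, hdK⟩).trans hd
  refine ⟨c', hmove, fun v ↦ hrange (mem_range.2 (hsurj v)), ?_⟩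
  by_cases hb' : b ∈ K
  · exact ⟨d, by tauto, b, hb', hdb⟩
  · exact ⟨b, hb', d, by tauto, hdb.symm⟩

end Shift

variable {G : SimpleGraph V}

theorem winsFrom_of_surjective (hV : ∀ c : Fin k → V, ¬ Injective c) {c : Fin k → V}
    (hc : Surjective c) {K : Set (Fin k)} (hK : K.Nonempty) : WinsFrom G c K := by
  by_cases hKu : K = univ
  · exact hKu ▸ .of_univ
  refine .of_forall_move fun H hH ↦ ?_
  obtain ⟨c', hmove, hc', a, ha, b, hb, hab⟩ :=
    exists_spread_move hH.2.preconnected hc (hV c) hK hKu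
  have hlt : K ⊂ share c' K :=
    (ssubset_iff_of_subset subset_union_left).2 ⟨a, Or.inr ⟨b, hb, hab⟩, ha⟩
  exact ⟨c', hmove, winsFrom_of_surjective hV hc' (hK.mono hlt.subset)⟩
termination_by Kᶜ.ncard
decreasing_by exact ncard_lt_ncard (compl_lt_compl_iff_lt.2 hlt)

theorem winsFrom_of_injective_or_surjective {K : Set (Fin k)}
    (h : ∀ c : Fin k → V, Injective c ∨ Surjective c → WinsFrom G c K) (c : Fin k → V) :
    WinsFrom G c K := by
  by_cases hc : Injective c ∨ Surjective c
  · exact h c hc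
  refine .of_forall_move fun H hH ↦ ?_
  obtain ⟨c', hmove, hlt⟩ :=
    exists_flood_move hH.2.preconnected (not_or.1 hc).1 (not_or.1 hc).2
  exact ⟨c', hmove, (winsFrom_of_injective_or_surjective h c').mono subset_union_left⟩
termination_by k - (range c).ncard
decreasing_by
  have hle : (range c').ncard ≤ k := by
    simpa [image_univ] using ncard_image_le (f := c') (s := univ)
  have := ncard_lt_ncard hlt
  omega

theorem winsFrom_of_agentsWin [NeZero k] (hwin : AgentsWin G k) {K : Set (Fin k)} (hK : 0 ∈ K)
    (c : Fin k → V) : WinsFrom G c K := by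
  refine winsFrom_of_injective_or_surjective (fun c hc ↦ ?_) c
  by_cases hinj : Injective c
  · exact (agentsWin_iff_winsFrom.1 hwin c hinj).mono (singleton_subset_iff.2 hK)
  have hsurj := hc.resolve_left hinj
  have : Finite V := .of_surjective c hsurj
  have hV (c' : Fin k → V) : ¬ Injective c' := fun hc' ↦ hinj <|
    (hsurj.bijective_of_nat_card_le (Nat.card_le_card_of_injective c' hc')).injective
  exact winsFrom_of_surjective hV hsurj ⟨0, hK⟩

end Broadcast

section AttachPath

variable {V : Type*} {G₀ : SimpleGraph V} {u : V} {m : ℕ}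

@[simp]
theorem attachPath_adj_inl_inl {a b : V} :
    (attachPath G₀ u m).Adj (.inl a) (.inl b) ↔ G₀.Adj a b := by
  simp [attachPath]

@[simp]
theorem attachPath_adj_inl_inr {a : V} {i : Fin m} :
    (attachPath G₀ u m).Adj (.inl a) (.inr i) ↔ a = u ∧ (i : ℕ) = 0 := by
  simp [attachPath, eq_comm]

@[simp]
theorem attachPath_adj_inr_inl {a : V} {i : Fin m} :
    (attachPath G₀ u m).Adj (.inr i) (.inl a) ↔ a = u ∧ (i : ℕ) = 0 := by
  rw [SimpleGraph.adj_comm, attachPath_adj_inl_inr]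

@[simp]
theorem attachPath_adj_inr_inr {i j : Fin m} :
    (attachPath G₀ u m).Adj (.inr i) (.inr j) ↔ (i : ℕ) + 1 = j ∨ (j : ℕ) + 1 = i := by
  simp [attachPath]

def towardBase (u : V) : V ⊕ Fin m → V ⊕ Fin m
  | .inl v => .inl v
  | .inr i => if h : (i : ℕ) = 0 then .inl u else .inr ⟨i - 1, by omega⟩

def pathDepth : V ⊕ Fin m → ℕ :=
  Sum.elim 0 fun i ↦ i + 1

theorem pathDepth_towardBase (x : V ⊕ Fin m) : pathDepth (towardBase u x) = pathDepth x - 1 := by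
  rcases x with v | i
  · rfl
  · by_cases h : (i : ℕ) = 0 <;> simp [towardBase, pathDepth, h]
    omega

/-- The edges of the attached path are bridges, so every admissible subgraph contains them. -/
theorem step_towardBase_of_validSub {H : SimpleGraph (V ⊕ Fin m)}
    (hH : ValidSub (attachPath G₀ u m) H) (x : V ⊕ Fin m) : Step H x (towardBase u x) := by
  rcases x with v | i
  · exact Or.inl rfl
  refine Or.inr ?_
  obtain ⟨⟨⟨x, y⟩, hxy⟩, -, ⟨j, rfl, hij⟩, hy⟩ := (hH.2.preconnected (.inr i) (.inl u)).some
    |>.exists_boundary_dart {x | ∃ j : Fin m, x = .inr j ∧ (i : ℕ) ≤ j} ⟨i, rfl, le_rfl⟩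
      (by simp)
  have hG := hH.1 hxy
  rcases y with v | j'
  · obtain ⟨rfl, hj⟩ := attachPath_adj_inr_inl.1 hG
    obtain rfl : i = j := Fin.ext (by omega)
    simpa [towardBase, hj] using hxy
  · have hj' : (j' : ℕ) < i := by simpa using hy
    have hjj' : (j' : ℕ) + 1 = j := by have := attachPath_adj_inr_inr.1 hG; omega
    obtain rfl : i = j := Fin.ext (by omega)
    have hbase : towardBase u (.inr i) = .inr j' := by
      simp only [towardBase, show (i : ℕ) ≠ 0 by omega, dite_false, Sum.inr.injEq]
      ext
      simp only
      omega
    rw [hbase]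
    exact hxy

/-- Collapsing the attached path onto `u` maps walks of `H` to walks of its restriction to `G₀`. -/
theorem validSub_comap_inl {H : SimpleGraph (V ⊕ Fin m)}
    (hH : ValidSub (attachPath G₀ u m) H) : ValidSub G₀ (H.comap Sum.inl) := by
  refine ⟨fun a b hab ↦ attachPath_adj_inl_inl.1 (hH.1 hab), ?_⟩
  have : Nonempty V := ⟨u⟩
  refine SimpleGraph.connected_iff_exists_forall_reachable _ |>.2 ⟨u, fun a ↦ ?_⟩
  let r : V ⊕ Fin m → V := Sum.elim id fun _ ↦ u
  have hr : ∀ x y, H.Adj x y → Relation.ReflTransGen (H.comap Sum.inl).Adj (r x) (r y) := by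
    rintro (v | i) (w | j) hxy
    · exact .single hxy
    · obtain ⟨rfl, -⟩ := attachPath_adj_inl_inr.1 (hH.1 hxy); exact .refl
    · obtain ⟨rfl, -⟩ := attachPath_adj_inr_inl.1 (hH.1 hxy); exact .refl
    · exact .refl
  have := (SimpleGraph.reachable_iff_reflTransGen _ _).1 (hH.2.preconnected (.inl u) (.inl a))
  exact (SimpleGraph.reachable_iff_reflTransGen _ _).2 (Relation.ReflTransGen.lift' r hr _ _ this)

theorem winsFrom_attachPath {k : ℕ} {K : Set (Fin k)} (h : ∀ Q : Fin k → V, WinsFrom G₀ Q K)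
    (c : Fin k → V ⊕ Fin m) : WinsFrom (attachPath G₀ u m) c K := by
  by_cases hc : ∀ a, ∃ v, c a = .inl v
  · choose Q hQ using hc
    obtain rfl : c = Sum.inl ∘ Q := funext hQ
    exact (h Q).comap Sum.inl_injective fun _ ↦ validSub_comap_inl
  refine .of_forall_move fun H hH ↦
    ⟨towardBase u ∘ c, fun a ↦ step_towardBase_of_validSub hH (c a), ?_⟩
  exact (winsFrom_attachPath h _).mono subset_union_left
termination_by ∑ a, pathDepth (c a)
decreasing_by
  obtain ⟨a, ha⟩ := not_forall.1 hc
  refine Finset.sum_lt_sum (fun a _ ↦ (pathDepth_towardBase (c a)).trans_le (Nat.sub_le _ _))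
    ⟨a, Finset.mem_univ a, ?_⟩
  rcases h : c a with v | i
  · exact absurd ⟨v, h⟩ ha
  · rw [comp_apply, pathDepth_towardBase, h]
    simp [pathDepth]

end AttachPath

theorem agentsWin_attachPath_general {V : Type*} {G₀ : SimpleGraph V}
    (u : V) (m : ℕ) (k : ℕ) [NeZero k] (hwin : AgentsWin G₀ k) :
    AgentsWin (attachPath G₀ u m) k :=
  agentsWin_iff_winsFrom.2 fun _ _ ↦
    winsFrom_attachPath (winsFrom_of_agentsWin hwin (mem_singleton 0)) _

/-- If `G` is obtained from a connected graph `G₀` by attaching a path at a vertex `u`,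
and `BROADCAST(G₀, k)` is an Agents win, then `BROADCAST(G, k)` is an Agents win. -/
theorem agentsWin_attachPath {V : Type*} {G₀ : SimpleGraph V} (hG₀ : G₀.Connected)
    (u : V) (m : ℕ) (k : ℕ) [NeZero k] (hwin : AgentsWin G₀ k) :
    AgentsWin (attachPath G₀ u m) k :=
  agentsWin_attachPath_general u m k hwin
end
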